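/- arXiv:2506.19277 — 2 statements merged into one kernel-verified Lean document; each statement's English description precedes it below -/
import Mathlib

section
/- Let C be a real q×n matrix and τ ∈ ℝ^q such that the feasible set 𝒞 = {x ∈ ℝⁿ : Cx = τ} is nonempty, let 𝓛 : ℝⁿ → ℝ be ℓ-Lipschitz, and suppose the Hoffman-type error bound holds: there is κ > 0 with dist(x, 𝒞) ≤ κ‖Cx − τ‖ for all x ∈ ℝⁿ. Then for every penalty parameter ρ > ℓκ, every global minimizer x* of the exact penalty function ℰ_ρ(x) = 𝓛(x) + ρ‖Cx − τ‖ satisfies Cx* = τ, and x* is a global minimizer of 𝓛 over the constrained set 𝒞. -/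
/-- **Exact penalty theorem.**
Under the Hoffman-type error bound `dist(x, 𝒞) ≤ κ‖Cx − τ‖` and an
`ℓ`-Lipschitz objective `𝓛`, for any penalty parameter `ρ > ℓκ` every global
minimizer of `ℰ_ρ(x) = 𝓛(x) + ρ‖Cx − τ‖` is feasible and minimizes `𝓛`
over `𝒞 = {x : Cx = τ}`. -/
theorem stmt_8 {n q : ℕ}
    (C : EuclideanSpace ℝ (Fin n) →L[ℝ] EuclideanSpace ℝ (Fin q))
    (τ : EuclideanSpace ℝ (Fin q))
    (𝒞 : Set (EuclideanSpace ℝ (Fin n))) (h𝒞 : 𝒞 = {x | C x = τ})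
    (hne : 𝒞.Nonempty)
    (𝓛 : EuclideanSpace ℝ (Fin n) → ℝ) (ℓ : ℝ)
    (hLip : ∀ x y, |𝓛 x - 𝓛 y| ≤ ℓ * ‖x - y‖)
    (κ : ℝ) (hκ : 0 < κ)
    (hHoffman : ∀ x, Metric.infDist x 𝒞 ≤ κ * ‖C x - τ‖) :
    ∀ ρ : ℝ, ℓ * κ < ρ →
      ∀ xstar : EuclideanSpace ℝ (Fin n),
        (∀ x, 𝓛 xstar + ρ * ‖C xstar - τ‖ ≤ 𝓛 x + ρ * ‖C x - τ‖) →
          C xstar = τ ∧ ∀ y ∈ 𝒞, 𝓛 xstar ≤ 𝓛 y := by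

  intro ρ hρ xstar hmin
  -- feasibility
  have hfeas : C xstar = τ := by
    rcases lt_or_ge ℓ 0 with hl | hl
    · -- ℓ < 0 forces xstar = any point, in particular a feasible one
      obtain ⟨y₀, hy₀⟩ := hne
      have h1 := hLip xstar y₀
      have h2 : (0:ℝ) ≤ ℓ * ‖xstar - y₀‖ := le_trans (abs_nonneg _) h1
      have h3 : ‖xstar - y₀‖ ≤ 0 := by nlinarith [norm_nonneg (xstar - y₀)]
      have : xstar = y₀ := by
        have := le_antisymm h3 (norm_nonneg _)
        rwa [norm_sub_eq_zero_iff] at this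
      rw [this]; rw [h𝒞] at hy₀; exact hy₀
    · -- ℓ ≥ 0 : exact penalty argument
      have hclosed : IsClosed 𝒞 := by
        rw [h𝒞]
        exact isClosed_eq C.continuous continuous_const
      obtain ⟨y, hy𝒞, hyd⟩ := hclosed.exists_infDist_eq_dist hne xstar
      have hdist : ‖xstar - y‖ ≤ κ * ‖C xstar - τ‖ := by
        rw [← dist_eq_norm, ← hyd]; exact hHoffman xstar
      have hCy : C y = τ := by rw [h𝒞] at hy𝒞; exact hy𝒞
      have hE := hmin y
      rw [hCy, sub_self, norm_zero, mul_zero, add_zero] at hE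
      have hdiff : 𝓛 y - 𝓛 xstar ≤ ℓ * ‖xstar - y‖ := by
        have := hLip y xstar
        rw [norm_sub_rev] at this
        exact le_trans (le_abs_self _) this
      have key : ρ * ‖C xstar - τ‖ ≤ ℓ * κ * ‖C xstar - τ‖ := by
        have h4 : ℓ * ‖xstar - y‖ ≤ ℓ * (κ * ‖C xstar - τ‖) :=
          mul_le_mul_of_nonneg_left hdist hl
        nlinarith
      have : (ρ - ℓ * κ) * ‖C xstar - τ‖ ≤ 0 := by nlinarith
      have hn0 : ‖C xstar - τ‖ ≤ 0 :=
        nonpos_of_mul_nonpos_right this (by linarith)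
      have := le_antisymm hn0 (norm_nonneg _)
      rwa [norm_sub_eq_zero_iff] at this
  refine ⟨hfeas, fun y hy => ?_⟩
  have hCy : C y = τ := by rw [h𝒞] at hy; exact hy
  have := hmin y
  rw [hfeas, hCy, sub_self, norm_zero, mul_zero, add_zero, add_zero] at this
  exact this
end

section
/- Let C be a real q×n matrix and τ ∈ ℝ^q such that 𝒞 = {x ∈ ℝⁿ : Cx = τ} is nonempty, let 𝓛 : ℝⁿ → ℝ be ℓ-Lipschitz, and suppose there is κ > 0 with dist(x, 𝒞) ≤ κ‖Cx − τ‖ for all x ∈ ℝⁿ. Then for every ρ ≥ ℓκ, the unconstrained infimum of the penalized objective equals the constrained infimum: inf_{x ∈ ℝⁿ} (𝓛(x) + ρ‖Cx − τ‖) = inf_{x ∈ 𝒞} 𝓛(x). -/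
/-- **Exact penalty: equality of infima.**
Under the Hoffman-type error bound and an `ℓ`-Lipschitz objective, for every
`ρ ≥ ℓκ` the unconstrained infimum of the penalized objective equals the
constrained infimum. -/
theorem stmt_9 {n q : ℕ}
    (C : EuclideanSpace ℝ (Fin n) →L[ℝ] EuclideanSpace ℝ (Fin q))
    (τ : EuclideanSpace ℝ (Fin q))
    (𝒞 : Set (EuclideanSpace ℝ (Fin n))) (h𝒞 : 𝒞 = {x | C x = τ})
    (hne : 𝒞.Nonempty)
    (𝓛 : EuclideanSpace ℝ (Fin n) → ℝ) (ℓ : ℝ)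
    (hLip : ∀ x y, |𝓛 x - 𝓛 y| ≤ ℓ * ‖x - y‖)
    (κ : ℝ) (hκ : 0 < κ)
    (hHoffman : ∀ x, Metric.infDist x 𝒞 ≤ κ * ‖C x - τ‖) :
    ∀ ρ : ℝ, ℓ * κ ≤ ρ →
      (⨅ x : EuclideanSpace ℝ (Fin n), (𝓛 x + ρ * ‖C x - τ‖)) =
        ⨅ x : 𝒞, 𝓛 x := by
  intro ρ hρ
  have hclosed : IsClosed 𝒞 := by
    rw [h𝒞]; exact isClosed_eq C.continuous continuous_const
  -- existence of closest point
  have hproj : ∀ x : EuclideanSpace ℝ (Fin n), ∃ y ∈ 𝒞,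
      dist x y ≤ κ * ‖C x - τ‖ := by
    intro x
    obtain ⟨y, hy, hdy⟩ := hclosed.exists_infDist_eq_dist hne x
    exact ⟨y, hy, by rw [← hdy]; exact hHoffman x⟩
  rw [iInf, iInf]
  apply csInf_eq_csInf_of_forall_exists_le
  · rintro v ⟨x, rfl⟩
    by_cases hℓ : 0 ≤ ℓ
    · obtain ⟨y, hy, hdy⟩ := hproj x
      refine ⟨𝓛 y, ⟨⟨y, hy⟩, rfl⟩, ?_⟩
      have h1 : 𝓛 y - 𝓛 x ≤ ℓ * ‖y - x‖ := (abs_le.mp (hLip y x)).2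
      have h2 : ℓ * ‖y - x‖ ≤ ρ * ‖C x - τ‖ := by
        calc ℓ * ‖y - x‖ ≤ ℓ * (κ * ‖C x - τ‖) := by
              apply mul_le_mul_of_nonneg_left _ hℓ
              rw [← dist_eq_norm, dist_comm]; exact hdy
          _ = (ℓ * κ) * ‖C x - τ‖ := by ring
          _ ≤ ρ * ‖C x - τ‖ :=
              mul_le_mul_of_nonneg_right hρ (norm_nonneg _)
      show 𝓛 y ≤ 𝓛 x + ρ * ‖C x - τ‖
      linarith
    · -- ℓ < 0 : the space is a subsingleton, so x ∈ 𝒞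
      push_neg at hℓ
      have hsub : ∀ a b : EuclideanSpace ℝ (Fin n), a = b := by
        intro a b
        by_contra hab
        have h0 : 0 < ‖a - b‖ := by
          simpa [sub_eq_zero] using hab
        have := (abs_nonneg (𝓛 a - 𝓛 b)).trans (hLip a b)
        nlinarith
      obtain ⟨y, hy⟩ := hne
      have hxy : x = y := hsub x y
      subst hxy
      refine ⟨𝓛 x, ⟨⟨x, hy⟩, rfl⟩, ?_⟩
      have : C x = τ := by rw [h𝒞] at hy; exact hy
      show 𝓛 x ≤ 𝓛 x + ρ * ‖C x - τ‖
      simp [this]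
  · rintro v ⟨⟨y, hy⟩, rfl⟩
    have : C y = τ := by rw [h𝒞] at hy; exact hy
    exact ⟨𝓛 y + ρ * ‖C y - τ‖, ⟨y, rfl⟩, by simp [this]⟩
end
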